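/- arXiv:1306.2548 — 10 statements merged into one kernel-verified Lean document; each statement's English description precedes it below -/
import Mathlib

section
/- Let δ be a semi-flower automaton with state set Q, alphabet A, and initial-final state q0. If a ∈ A is a letter such that the letter map ā : Q → Q, q ↦ δ(q,a), is bijective, then ā is a circular permutation on Q, i.e., for all p, q ∈ Q there exists k ∈ ℕ with ā^k(p) = q. -/
/-- Extension of the transition function `δ : Q → A → Q` to words (lists of letters):
`δ*(q, ε) = q` and `δ*(q, a·w) = δ*(δ(q,a), w)`. -/
def deltaStar {Q A : Type*} (δ : Q → A → Q) : Q → List A → Q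
  | q, [] => q
  | q, a :: w => deltaStar δ (δ q a) w

/-- `δ` (with initial-final state `q0`) is a semi-flower automaton: every state is
accessible and coaccessible, and every cycle passes through `q0` (i.e. for every
nonempty word `w` labelling a cycle at `q`, some prefix of `w` leads from `q` to `q0`). -/
def IsSFA {Q A : Type*} (δ : Q → A → Q) (q0 : Q) : Prop :=
  (∀ q : Q, ∃ w : List A, deltaStar δ q0 w = q) ∧
  (∀ q : Q, ∃ w : List A, deltaStar δ q w = q0) ∧
  (∀ (q : Q) (w : List A), w ≠ [] → deltaStar δ q w = q →
    ∃ u : List A, u <+: w ∧ deltaStar δ q u = q0)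

/-- A map `f : Q → Q` is a circular permutation if it is bijective and for all
`p q : Q` there is `k : ℕ` with `f^[k] p = q`. -/
def IsCircularPerm {Q : Type*} (f : Q → Q) : Prop :=
  Function.Bijective f ∧ ∀ p q : Q, ∃ k : ℕ, f^[k] p = q

/-- The set of branch points going in (bpis): states that are the target of two
distinct transitions. -/
def BPI {Q A : Type*} (δ : Q → A → Q) : Set Q :=
  {q | ∃ pb₁ pb₂ : Q × A, pb₁ ≠ pb₂ ∧ δ pb₁.1 pb₁.2 = q ∧ δ pb₂.1 pb₂.2 = q}

lemma deltaStar_replicate {Q A : Type*} (δ : Q → A → Q) (a : A) :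
    ∀ (k : ℕ) (q : Q), deltaStar δ q (List.replicate k a) = (fun q => δ q a)^[k] q := by
  intro k
  induction k with
  | zero => intro q; rfl
  | succ n ih =>
    intro q
    simp only [List.replicate_succ, deltaStar, Function.iterate_succ_apply]
    exact ih (δ q a)

/-- In a semi-flower automaton, if a letter map is bijective then it is a circular
permutation on the state set. -/
theorem sfa_bijective_letter_is_circular {Q A : Type*} [Fintype Q] [Nonempty Q] [Fintype A]
    (δ : Q → A → Q) (q0 : Q) (hSFA : IsSFA δ q0)
    (a : A) (ha : Function.Bijective (fun q => δ q a)) :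
    IsCircularPerm (fun q => δ q a) := by
  set f : Q → Q := fun q => δ q a with hf
  refine ⟨ha, ?_⟩
  -- f as a permutation
  set e : Equiv.Perm Q := Equiv.ofBijective f ha with he
  have hcoe : (e : Q → Q) = f := rfl
  set n : ℕ := orderOf e with hn
  have hnpos : 0 < n := orderOf_pos e
  have hiter : ∀ (k : ℕ) (q : Q), f^[k] q = (e ^ k) q := by
    intro k q
    rw [Equiv.Perm.coe_pow, hcoe]
  have hfn : ∀ q : Q, f^[n] q = q := by
    intro q
    rw [hiter, pow_orderOf_eq_one]
    rfl
  -- every state reaches q0 by iterating f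
  have hreach : ∀ p : Q, ∃ j : ℕ, f^[j] p = q0 := by
    intro p
    have hcycle : deltaStar δ p (List.replicate n a) = p := by
      rw [deltaStar_replicate]; exact hfn p
    have hne : List.replicate n a ≠ [] := by
      simp [hnpos.ne']
    obtain ⟨u, hu, hu0⟩ := hSFA.2.2 p (List.replicate n a) hne hcycle
    have hurep : u = List.replicate u.length a := by
      apply List.eq_replicate_length.mpr
      intro b hb
      exact List.eq_of_mem_replicate (hu.sublist.subset hb)
    refine ⟨u.length, ?_⟩
    rw [← deltaStar_replicate, ← hurep, hu0]
  intro p q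
  obtain ⟨j, hj⟩ := hreach p
  obtain ⟨i, hi⟩ := hreach q
  -- q = f^[i*(n-1)] q0
  have hq : f^[i * (n - 1)] q0 = q := by
    have : f^[i * (n - 1)] (f^[i] q) = f^[i * (n - 1) + i] q := by
      rw [← Function.iterate_add_apply, Nat.add_comm]
    rw [← hi, this]
    have harith : i * (n - 1) + i = n * i := by
      obtain ⟨m, hm⟩ : ∃ m, n = m + 1 := ⟨n - 1, by omega⟩
      rw [hm, Nat.add_sub_cancel]; ring
    rw [harith]
    have : ∀ q : Q, f^[n * i] q = q := by
      intro q
      rw [Function.iterate_mul]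
      exact Function.iterate_fixed (hfn q) i
    exact this q
  refine ⟨j + i * (n - 1), ?_⟩
  rw [Nat.add_comm, Function.iterate_add_apply, hj, hq]
end

section
/- Let δ be a semi-flower automaton with state set Q, nonempty alphabet A, and initial-final state q0. Then the set BPI of branch points going in is empty if and only if A has exactly one element. -/
/-!
There are no bpis iff `(p, b) ↦ δ p b` is injective on `Q × A`. In a semi-flower automaton
this map is onto `Q`, since every state ends a nonempty path from `q0` (for `q0` itself, leave
it and return by coaccessibility). A surjection from the finite set
`Q × A` onto `Q` is injective exactly when `|Q| |A| = |Q|`, i.e. `|A| = 1`.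
-/

section

variable {Q A : Type*} (δ : Q → A → Q)

theorem deltaStar_append (q : Q) (u v : List A) :
    deltaStar δ q (u ++ v) = deltaStar δ (deltaStar δ q u) v := by
  induction u generalizing q with
  | nil => rfl
  | cons a u ih => exact ih (δ q a)

theorem BPI_eq_empty_iff_injective :
    BPI δ = ∅ ↔ Function.Injective (Function.uncurry δ) := by
  rw [Set.eq_empty_iff_forall_notMem]
  constructor
  · intro h pb₁ pb₂ heq
    by_contra hne
    exact h _ ⟨pb₁, pb₂, hne, rfl, heq.symm⟩
  · rintro h q ⟨pb₁, pb₂, hne, rfl, heq⟩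
    exact hne (h heq.symm)

theorem deltaStar_mem_range_uncurry (p : Q) {w : List A} (hw : w ≠ []) :
    deltaStar δ p w ∈ Set.range (Function.uncurry δ) := by
  obtain ⟨v, b, rfl⟩ := (List.eq_nil_or_concat w).resolve_left hw
  exact ⟨(deltaStar δ p v, b), by simp [deltaStar_append, deltaStar]⟩

variable {δ}

theorem IsSFA.surjective_uncurry [Nonempty A] {q0 : Q} (h : IsSFA δ q0) :
    Function.Surjective (Function.uncurry δ) := by
  obtain ⟨hacc, hcoacc, -⟩ := h
  obtain ⟨a⟩ := ‹Nonempty A›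
  have hq0 : q0 ∈ Set.range (Function.uncurry δ) := by
    obtain ⟨v, hv⟩ := hcoacc (δ q0 a)
    simpa [deltaStar, hv] using deltaStar_mem_range_uncurry δ q0 (List.cons_ne_nil a v)
  intro q
  obtain ⟨w, rfl⟩ := hacc q
  rcases eq_or_ne w [] with rfl | hw
  · exact hq0
  · exact deltaStar_mem_range_uncurry δ q0 hw

theorem injective_uncurry_iff_card_eq_one [Fintype Q] [Nonempty Q] [Fintype A]
    (hδ : Function.Surjective (Function.uncurry δ)) :
    Function.Injective (Function.uncurry δ) ↔ Fintype.card A = 1 := by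
  have hbij : Function.Bijective (Function.uncurry δ) ↔ Function.Injective (Function.uncurry δ) :=
    ⟨And.left, fun hinj => ⟨hinj, hδ⟩⟩
  rw [← hbij, Fintype.bijective_iff_surjective_and_card, and_iff_right hδ, Fintype.card_prod,
    Nat.mul_eq_left Fintype.card_ne_zero]

end

theorem sfa_bpi_empty_iff_card_alphabet_one_general {Q A : Type*} [Fintype Q]
    [Fintype A] [Nonempty A]
    (δ : Q → A → Q) (q0 : Q) (hSFA : IsSFA δ q0) :
    BPI δ = ∅ ↔ Fintype.card A = 1 := by
  have : Nonempty Q := ⟨q0⟩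
  rw [BPI_eq_empty_iff_injective, injective_uncurry_iff_card_eq_one hSFA.surjective_uncurry]

/-- In a semi-flower automaton over a nonempty alphabet, there are no bpis iff the
alphabet has exactly one element. -/
theorem sfa_bpi_empty_iff_card_alphabet_one {Q A : Type*} [Fintype Q] [Nonempty Q]
    [Fintype A] [Nonempty A]
    (δ : Q → A → Q) (q0 : Q) (hSFA : IsSFA δ q0) :
    BPI δ = ∅ ↔ Fintype.card A = 1 :=
  sfa_bpi_empty_iff_card_alphabet_one_general δ q0 hSFA
end

section
/- Let δ be a circular semi-flower automaton with state set Q, alphabet A, initial-final state q0, and distinguished letter a whose letter map ā is a circular permutation. Let p ∈ Q be the unique state with δ(p,a) = q0. Then for every letter b ∈ A, δ(p,b) = q0. -/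
/-- In a circular semi-flower automaton, if `p` is the (unique) state with
`δ p a = q0`, then every letter maps `p` to `q0`. -/
theorem csfa_pred_of_q0_maps_to_q0 {Q A : Type*} [Fintype Q] [Nonempty Q] [Fintype A]
    (δ : Q → A → Q) (q0 : Q) (hSFA : IsSFA δ q0)
    (a : A) (hca : IsCircularPerm (fun q => δ q a))
    (p : Q) (hp : δ p a = q0) (b : A) :
    δ p b = q0 := by

  obtain ⟨hbij, hcirc⟩ := hca
  have hrep : ∀ (k : ℕ) (q : Q),
      deltaStar δ q (List.replicate k a) = (fun q => δ q a)^[k] q := by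
    intro k
    induction k with
    | zero => intro q; rfl
    | succ n ih =>
        intro q
        simp only [List.replicate_succ, deltaStar, ih, Function.iterate_succ_apply]
  have main : ∀ k : ℕ, (fun q => δ q a)^[k] (δ p b) = p → δ p b = q0 := by
    intro k
    induction k using Nat.strong_induction_on with
    | _ k IH =>
      intro hk
      have hcyc : deltaStar δ p (b :: List.replicate k a) = p := by
        simp only [deltaStar, hrep, hk]
      obtain ⟨u, hu, huq0⟩ := hSFA.2.2 p (b :: List.replicate k a) (by simp) hcyc
      rcases u with _ | ⟨c, u'⟩
      · have hpq0 : p = q0 := huq0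
        have hfix : δ q0 a = q0 := hpq0 ▸ hp
        obtain ⟨m, hm⟩ := hcirc q0 (δ p b)
        have hfix' : (fun q => δ q a)^[m] q0 = q0 := Function.iterate_fixed hfix m
        rw [hfix'] at hm; exact hm.symm
      · have hc : c = b := (List.cons_prefix_cons.mp hu).1
        have hu' : u' <+: List.replicate k a := (List.cons_prefix_cons.mp hu).2
        have hlen : u'.length ≤ k := by simpa using hu'.length_le
        have hu'eq : u' = List.replicate u'.length a := by
          have h := List.prefix_iff_eq_take.mp hu'
          simpa [List.take_replicate, Nat.min_eq_left hlen] using h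
        rw [hc, hu'eq] at huq0
        have hj : (fun q => δ q a)^[u'.length] (δ p b) = q0 := by
          simpa only [deltaStar, hrep] using huq0
        rcases Nat.eq_zero_or_pos u'.length with h0 | hpos
        · simpa [h0] using hj
        · obtain ⟨m, hm⟩ : ∃ m, u'.length = m + 1 :=
            ⟨u'.length - 1, (Nat.succ_pred_eq_of_pos hpos).symm⟩
          rw [hm, Function.iterate_succ_apply'] at hj
          have hinj : (fun q => δ q a)^[m] (δ p b) = p := hbij.injective (by
            show δ _ a = δ p a
            rw [hp]; exact hj)
          exact IH m (by omega) hinj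
  obtain ⟨k0, hk0⟩ := hcirc (δ p b) p
  exact main k0 hk0
end

section
/- Let δ be a circular semi-flower automaton with state set Q, alphabet A, initial-final state q0, and distinguished letter a whose letter map ā is a circular permutation. Then for every letter b ∈ A with b ≠ a, the image of the letter map b̄ : Q → Q, q ↦ δ(q,b), is contained in BPI, the set of branch points going in. -/
/-- In a circular semi-flower automaton, for every letter `b ≠ a` the image of the
letter map of `b` is contained in the set of bpis. -/
theorem csfa_range_of_other_letter_subset_bpi {Q A : Type*} [Fintype Q] [Nonempty Q]
    [Fintype A]
    (δ : Q → A → Q) (q0 : Q) (hSFA : IsSFA δ q0)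
    (a : A) (hca : IsCircularPerm (fun q => δ q a))
    (b : A) (hb : b ≠ a) :
    Set.range (fun q => δ q b) ⊆ BPI δ := by
  rintro t ⟨q, rfl⟩
  obtain ⟨p, hp⟩ := hca.1.2 (δ q b)
  exact ⟨(q, b), (p, a), by simp [Prod.ext_iff, hb], rfl, hp⟩
end

section
/- Let δ be a circular semi-flower automaton with state set Q, alphabet A, initial-final state q0, and distinguished letter a whose letter map ā is a circular permutation. Suppose the set BPI of branch points going in has exactly one element. Then for every letter b ∈ A with b ≠ a and every state q ∈ Q, δ(q,b) = q0 (i.e., b̄ is the constant map with value q0). -/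
/-- In a circular semi-flower automaton with a unique bpi, every letter `b ≠ a`
induces the constant map with value `q0`. -/
theorem csfa_unique_bpi_other_letters_constant {Q A : Type*} [Fintype Q] [Nonempty Q]
    [Fintype A]
    (δ : Q → A → Q) (q0 : Q) (hSFA : IsSFA δ q0)
    (a : A) (hca : IsCircularPerm (fun q => δ q a))
    (hbpi : (BPI δ).ncard = 1)
    (b : A) (hb : b ≠ a) (q : Q) :
    δ q b = q0 := by
  obtain ⟨x, hx⟩ := Set.ncard_eq_one.mp hbpi
  have hmem : ∀ p : Q, δ p b ∈ BPI δ := by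
    intro p
    obtain ⟨s, hs⟩ := hca.1.2 (δ p b)
    exact ⟨(s, a), (p, b), by simp [Prod.ext_iff, hb.symm], hs, rfl⟩
  have hconst : ∀ p : Q, δ p b = x := fun p => by
    have := hmem p; rw [hx] at this; exact this
  have hcyc : deltaStar δ x [b] = x := by
    simp [deltaStar, hconst]
  obtain ⟨u, hu, hq0⟩ := hSFA.2.2 x [b] (by simp) hcyc
  have hxq0 : x = q0 := by
    obtain ⟨t, ht⟩ := hu
    rcases u with _ | ⟨c, u⟩
    · exact hq0
    · simp only [List.cons_append, List.cons.injEq] at ht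
      obtain ⟨rfl, ht2⟩ := ht
      rcases List.append_eq_nil_iff.mp ht2 with ⟨rfl, -⟩
      rw [← hq0]; simp [deltaStar, hconst]
  rw [hconst q, hxq0]
end

section
/- Let δ be a semi-flower automaton with state set Q, nonempty alphabet A, and initial-final state q0, and suppose the automaton has no branch points going in (BPI = ∅). Then A has exactly one element a, and the letter map ā : Q → Q, q ↦ δ(q,a), is a circular permutation on Q. -/
/-- A semi-flower automaton over a nonempty alphabet with no bpis has a one-letter
alphabet, and that letter induces a circular permutation. -/
theorem sfa_no_bpi_is_circular {Q A : Type*} [Fintype Q] [Nonempty Q]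
    [Fintype A] [Nonempty A]
    (δ : Q → A → Q) (q0 : Q) (hSFA : IsSFA δ q0)
    (hbpi : BPI δ = ∅) :
    ∃ a : A, (∀ b : A, b = a) ∧ IsCircularPerm (fun q => δ q a) := by
  classical
  -- the global transition map is injective
  have hg : Function.Injective (fun pb : Q × A => δ pb.1 pb.2) := by
    intro x y hxy
    by_contra hne
    have : δ x.1 x.2 ∈ BPI δ := ⟨x, y, hne, rfl, hxy.symm⟩
    rw [hbpi] at this
    exact this
  -- the alphabet has one element
  have hcard : Fintype.card A ≤ 1 := by
    have h1 : Fintype.card (Q × A) ≤ Fintype.card Q := Fintype.card_le_of_injective _ hg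
    rw [Fintype.card_prod] at h1
    have hQ : 0 < Fintype.card Q := Fintype.card_pos
    nlinarith
  obtain ⟨a⟩ := ‹Nonempty A›
  have hall : ∀ b : A, b = a := fun b =>
    Fintype.card_le_one_iff.mp hcard b a
  refine ⟨a, hall, ?_, ?_⟩
  · -- bijective
    have hinj : Function.Injective (fun q => δ q a) := by
      intro p q h
      have := hg (a₁ := (p, a)) (a₂ := (q, a)) h
      simpa using congrArg Prod.fst this
    exact Finite.injective_iff_bijective.mp hinj
  · -- circularity
    have key : ∀ (w : List A) (q : Q),
        deltaStar δ q w = (fun q => δ q a)^[w.length] q := by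
      intro w
      induction w with
      | nil => intro q; rfl
      | cons b w ih =>
        intro q
        rw [hall b]
        simp only [deltaStar, List.length_cons, Function.iterate_succ_apply]
        exact ih (δ q a)
    intro p q
    obtain ⟨w1, hw1⟩ := hSFA.2.1 p
    obtain ⟨w2, hw2⟩ := hSFA.1 q
    refine ⟨w2.length + w1.length, ?_⟩
    rw [Function.iterate_add_apply, ← key w2, ← key w1, hw1, hw2]
end

section
/- Let δ be a circular semi-flower automaton with state set Q, alphabet A, initial-final state q0, and distinguished letter a whose letter map ā is a circular permutation, and suppose the set BPI of branch points going in has exactly one element. Then for every word x ∈ A*, either x̄ = ā^k for some k ∈ ℕ, or x̄ is a constant map. -/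
/-- In a circular semi-flower automaton with a unique bpi, every word map is either
a power of the letter map of `a` or a constant map. -/
theorem csfa_unique_bpi_word_maps {Q A : Type*} [Fintype Q] [Nonempty Q] [Fintype A]
    (δ : Q → A → Q) (q0 : Q) (hSFA : IsSFA δ q0)
    (a : A) (hca : IsCircularPerm (fun q => δ q a))
    (hbpi : (BPI δ).ncard = 1)
    (x : List A) :
    (∃ k : ℕ, (fun q => deltaStar δ q x) = (fun q => δ q a)^[k]) ∨
    (∃ c : Q, ∀ q : Q, deltaStar δ q x = c) := by
  classical
  obtain ⟨z, hz⟩ := Set.ncard_eq_one.mp hbpi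
  -- every non-`a` transition lands on the unique bpi `z`
  have key : ∀ (p : Q) (b : A), b ≠ a → δ p b = z := by
    intro p b hb
    obtain ⟨p', hp'⟩ := hca.1.2 (δ p b)
    have : δ p b ∈ BPI δ := by
      refine ⟨(p, b), (p', a), ?_, rfl, hp'⟩
      intro h
      exact hb (congrArg Prod.snd h)
    rw [hz] at this
    exact this
  induction x with
  | nil =>
    left
    exact ⟨0, rfl⟩
  | cons b w ih =>
    rcases eq_or_ne b a with rfl | hb
    · rcases ih with ⟨k, hk⟩ | ⟨c, hc⟩
      · left
        refine ⟨k + 1, ?_⟩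
        funext q
        have : deltaStar δ q (b :: w) = deltaStar δ (δ q b) w := rfl
        rw [this, congrFun hk (δ q b), Function.iterate_succ_apply]
      · right
        exact ⟨c, fun q => hc (δ q b)⟩
    · right
      refine ⟨deltaStar δ z w, fun q => ?_⟩
      have : deltaStar δ q (b :: w) = deltaStar δ (δ q b) w := rfl
      rw [this, key q b hb]
end

section
/- Let δ be a circular semi-flower automaton with state set Q, alphabet A, initial-final state q0, and distinguished letter a whose letter map ā is a circular permutation, and suppose the set BPI of branch points going in is exactly {q0, qm} with q0 ≠ qm. Then for every letter b ∈ A, if the image of the letter map b̄ : Q → Q has exactly two elements, then that image equals {q0, qm}. -/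
/-!
Since `ā` is onto, every state is the target of an `a`-transition. Hence for `b ≠ a` each
state in the image of `b̄` is also the target of a `b`-transition, i.e. a bpi, so the image
lies in `{q0, qm}` and equals it by counting. For `b = a` the image is all of `Q`, which then
has two elements and so is `{q0, qm}` as well.
-/

lemma range_subset_BPI_of_surjective {Q A : Type*} {δ : Q → A → Q} {a b : A}
    (ha : Function.Surjective (fun q => δ q a)) (hba : b ≠ a) :
    Set.range (fun q => δ q b) ⊆ BPI δ := by
  rintro _ ⟨p, rfl⟩
  obtain ⟨p', hp'⟩ := ha (δ p b)
  exact ⟨(p, b), (p', a), by simp [hba], rfl, hp'⟩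

theorem csfa_two_bpi_rank_two_letter_general {Q A : Type*} [Fintype Q]
    (δ : Q → A → Q) (q0 : Q)
    (a : A) (hca : IsCircularPerm (fun q => δ q a))
    (qm : Q) (hne : q0 ≠ qm) (hbpi : BPI δ = {q0, qm})
    (b : A) (hb : (Set.range (fun q => δ q b)).ncard = 2) :
    Set.range (fun q => δ q b) = {q0, qm} := by
  have hpair : ({q0, qm} : Set Q).ncard = 2 := Set.ncard_pair hne
  by_cases hba : b = a
  · subst hba
    rw [Set.range_eq_univ.mpr hca.1.2] at hb ⊢
    exact (Set.eq_of_subset_of_ncard_le (Set.subset_univ _) (by rw [hpair, hb])).symm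
  · exact Set.eq_of_subset_of_ncard_le (hbpi ▸ range_subset_BPI_of_surjective hca.1.2 hba)
      (by rw [hpair, hb])

/-- In a circular semi-flower automaton with exactly two bpis `q0` and `qm`, every
letter map whose image has exactly two elements has image `{q0, qm}`. -/
theorem csfa_two_bpi_rank_two_letter {Q A : Type*} [Fintype Q] [Nonempty Q] [Fintype A]
    (δ : Q → A → Q) (q0 : Q) (hSFA : IsSFA δ q0)
    (a : A) (hca : IsCircularPerm (fun q => δ q a))
    (qm : Q) (hne : q0 ≠ qm) (hbpi : BPI δ = {q0, qm})
    (b : A) (hb : (Set.range (fun q => δ q b)).ncard = 2) :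
    Set.range (fun q => δ q b) = {q0, qm} :=
  csfa_two_bpi_rank_two_letter_general δ q0 a hca qm hne hbpi b hb
end

section
/- Let δ be a circular semi-flower automaton with state set Q, alphabet A, initial-final state q0, and distinguished letter a whose letter map ā is a circular permutation, and suppose the set BPI of branch points going in is exactly {q0, qm} with q0 ≠ qm. Then there exists a letter b ∈ A such that the image of the letter map b̄ : Q → Q equals {q0, qm}. -/
/-- In a circular semi-flower automaton with exactly two bpis `q0` and `qm`, some
letter map has image exactly `{q0, qm}`. -/
theorem csfa_two_bpi_exists_rank_two_letter {Q A : Type*} [Fintype Q] [Nonempty Q]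
    [Fintype A]
    (δ : Q → A → Q) (q0 : Q) (hSFA : IsSFA δ q0)
    (a : A) (hca : IsCircularPerm (fun q => δ q a))
    (qm : Q) (hne : q0 ≠ qm) (hbpi : BPI δ = {q0, qm}) :
    ∃ b : A, Set.range (fun q => δ q b) = {q0, qm} := by
  -- qm is a bpi, so it has two distinct incoming transitions
  have hqm : qm ∈ BPI δ := by rw [hbpi]; exact Or.inr rfl
  obtain ⟨pb₁, pb₂, hpb, h1, h2⟩ := hqm
  -- at most one of them has letter `a` (since ā is injective), so pick b ≠ a with δ p b = qm
  obtain ⟨p, b, hba, hpb'⟩ : ∃ (p : Q) (b : A), b ≠ a ∧ δ p b = qm := by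
    by_contra h
    push_neg at h
    have e1 : pb₁.2 = a := by
      by_contra hc; exact h pb₁.1 pb₁.2 hc h1
    have e2 : pb₂.2 = a := by
      by_contra hc; exact h pb₂.1 pb₂.2 hc h2
    rw [e1] at h1; rw [e2] at h2
    have : δ pb₁.1 a = δ pb₂.1 a := h1.trans h2.symm
    have hp : pb₁.1 = pb₂.1 := hca.1.1 this
    exact hpb (Prod.ext hp (e1.trans e2.symm))
  -- every state hit by b is a bpi, hence in {q0, qm}
  have hrange : ∀ q : Q, δ q b = q0 ∨ δ q b = qm := by
    intro q
    obtain ⟨p', hp'⟩ := hca.1.2 (δ q b)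
    have : δ q b ∈ BPI δ := by
      refine ⟨(q, b), (p', a), ?_, rfl, hp'⟩
      intro h; exact hba (congrArg Prod.snd h)
    rw [hbpi] at this
    exact this
  -- δ qm b ≠ qm (else a cycle at qm avoiding q0), so δ qm b = q0
  have hqmb : δ qm b = q0 := by
    rcases hrange qm with h | h
    · exact h
    · exfalso
      obtain ⟨u, hu, hu0⟩ := hSFA.2.2 qm [b] (by simp) (by simpa [deltaStar] using h)
      obtain ⟨t, ht⟩ := hu
      match u, t, ht with
      | [], _, _ => exact hne (by simpa [deltaStar] using hu0.symm)
      | [c], [], ht =>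
        have : c = b := by simpa using ht
        subst this
        simp [deltaStar, h] at hu0
        exact hne (hu0.symm)
  refine ⟨b, ?_⟩
  ext q
  constructor
  · rintro ⟨r, rfl⟩
    rcases hrange r with h | h <;> simp [h]
  · rintro (rfl | rfl)
    · exact ⟨qm, hqmb⟩
    · exact ⟨p, hpb'⟩
end

section
/- Let Q be a finite set of cardinality n, let f : Q → Q be a circular permutation, and let p, q ∈ Q with p ≠ q. If r is an integer with 0 < r < n such that f^r maps the set {p, q} onto itself (i.e., {f^r(p), f^r(q)} = {p, q}), then n = 2r and f^r(p) = q. -/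
/-- If a circular permutation on an `n`-element set maps a two-element set
`{p, q}` onto itself after `r` steps with `0 < r < n`, then `n = 2 * r` and the
`r`-th iterate swaps `p` and `q`. -/
theorem circular_perm_two_set_period {Q : Type*} [Fintype Q] [Nonempty Q]
    (n : ℕ) (hn : Fintype.card Q = n)
    (f : Q → Q) (hf : IsCircularPerm f)
    (p q : Q) (hpq : p ≠ q)
    (r : ℕ) (hr0 : 0 < r) (hrn : r < n)
    (h : ({f^[r] p, f^[r] q} : Set Q) = {p, q}) :
    n = 2 * r ∧ f^[r] p = q := by
  obtain ⟨hbij, hcirc⟩ := hf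
  set e : Equiv.Perm Q := Equiv.ofBijective f hbij with he
  have hef : ∀ k x, (e ^ k) x = f^[k] x := by
    intro k x; rw [Equiv.Perm.coe_pow]; rfl
  have hcyc : e.IsCycleOn (Finset.univ : Finset Q) := by
    constructor
    · simpa using Set.bijective_iff_bijOn_univ.mp e.bijective
    · intro x _ y _
      obtain ⟨k, hk⟩ := hcirc x y
      exact ⟨(k : ℤ), by rw [zpow_natCast]; rw [hef]; exact hk⟩
  have key : ∀ (x : Q) (k : ℕ), f^[k] x = x → n ∣ k := by
    intro x k hk
    have := (hcyc.pow_apply_eq (Finset.mem_univ x)).mp (by rw [hef]; exact hk)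
    simpa [hn] using this
  have hp : f^[r] p ∈ ({p, q} : Set Q) := by rw [← h]; left; rfl
  have hq : f^[r] q ∈ ({p, q} : Set Q) := by rw [← h]; right; rfl
  have hndr : ¬ n ∣ r := fun hd => absurd (Nat.le_of_dvd hr0 hd) (not_le.mpr hrn)
  have hpq' : f^[r] p = q := by
    rcases hp with hp | hp
    · exact absurd (key p r hp) hndr
    · exact hp
  have hqp : f^[r] q = p := by
    rcases hq with hq | hq
    · exact hq
    · exact absurd (key q r hq) hndr
  refine ⟨?_, hpq'⟩
  have h2r : f^[2 * r] p = p := by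
    rw [two_mul, Function.iterate_add_apply, hpq', hqp]
  have hdvd := key p (2 * r) h2r
  have : n ≤ 2 * r := Nat.le_of_dvd (by omega) hdvd
  obtain ⟨c, hc⟩ := hdvd
  have hc2 : c < 2 := by
    by_contra h'
    push_neg at h'
    have : 2 * n ≤ n * c := by nlinarith
    omega
  have hc1 : 1 ≤ c := by nlinarith
  have hceq : c = 1 := by omega
  rw [hceq, mul_one] at hc
  omega
end
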